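/- Let A_1, …, A_{m−1} be a skew Clifford system on ℝ^{n+1} and let F(x,y) = ⟨x,y⟩² + Σ_{q=1}^{m−1} ⟨A_q x, y⟩². For x, y ∈ ℝ^{n+1} with ‖x‖ = ‖y‖ = 1, the gradient of F tangential to S^n × S^n, namely ∇̄F = DF − ⟨DF,(x,0)⟩(x,0) − ⟨DF,(0,y)⟩(0,y) where DF is the Euclidean gradient, satisfies ‖∇̄F‖² = 8F − 8F². -/

import Mathlib

/-!
The tangential gradient of `F` is governed by one observation: for a unit vector `x`, the
vectors `x, A₁ x, …, A_{m-1} x` are orthonormal (Clifford relations plus skew-symmetry), and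
`F(x, ·) = Σ_w ⟨w, ·⟩²` is the sum of squared coordinates along this frame. For such a sum `f`
over an orthonormal family, the Euclidean gradient `G = 2 Σ ⟨w, y⟩ w` has `‖G‖² = 4 f(y)` and
`⟨G, y⟩ = 2 f(y)`, so at a unit vector `y` Pythagoras gives `‖G - ⟨G, y⟩ y‖² = 4f - 4f²`.
Since `⟨A x, y⟩ = -⟨A y, x⟩`, `F` is symmetric and the same computation applies to the
`x`-variable; the two halves add up to `8F - 8F²`.
-/

open Matrix
open scoped RealInnerProductSpace BigOperators

noncomputable section

/-- A skew Clifford system `A_1, …, A_{m-1}` on `ℝ^N`: skew-symmetric matrices with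
`A_p A_q + A_q A_p = -2 δ_{pq} Id`. -/
def IsSkewCliffordSystem {N m : ℕ} (A : Fin (m - 1) → Matrix (Fin N) (Fin N) ℝ) : Prop :=
  (∀ p q, A p * A q + A q * A p =
      if p = q then (-2 : ℝ) • (1 : Matrix (Fin N) (Fin N) ℝ) else 0) ∧
  (∀ p, (A p)ᵀ = -A p)

/-- The action of a matrix on Euclidean space. -/
def act {N : ℕ} (A : Matrix (Fin N) (Fin N) ℝ) (x : EuclideanSpace ℝ (Fin N)) :
    EuclideanSpace ℝ (Fin N) :=
  Matrix.toEuclideanLin A x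

/-- The splitting form of the FKM isoparametric polynomial:
`F(x,y) = ⟨x,y⟩² + Σ_q ⟨A_q x, y⟩²`. -/
def FKM {N m : ℕ} (A : Fin (m - 1) → Matrix (Fin N) (Fin N) ℝ)
    (x y : EuclideanSpace ℝ (Fin N)) : ℝ :=
  ⟪x, y⟫ ^ 2 + ∑ q, ⟪act (A q) x, y⟫ ^ 2

section SumInnerSq

variable {E : Type*} [NormedAddCommGroup E] [InnerProductSpace ℝ E]

theorem norm_sub_inner_smul_sq_of_norm_eq_one (G : E) {x : E} (hx : ‖x‖ = 1) :
    ‖G - ⟪G, x⟫ • x‖ ^ 2 = ‖G‖ ^ 2 - ⟪G, x⟫ ^ 2 := by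
  rw [norm_sub_sq_real, real_inner_smul_right, norm_smul, hx, Real.norm_eq_abs, mul_one, sq_abs]
  ring

variable [CompleteSpace E] {ι : Type*} [Fintype ι]

theorem hasGradientAt_sum_inner_sq (w : ι → E) (x : E) :
    HasGradientAt (fun u => ∑ i, ⟪w i, u⟫ ^ 2) (∑ i, (2 * ⟪w i, x⟫) • w i) x := by
  rw [hasGradientAt_iff_hasFDerivAt, map_sum]
  refine HasFDerivAt.fun_sum fun i _ => ?_
  refine (((innerSL ℝ (w i)).hasFDerivAt (x := x)).pow 2).congr_fderiv ?_
  ext v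
  simp

theorem Orthonormal.norm_sub_inner_smul_gradient_sum_inner_sq {w : ι → E}
    (hw : Orthonormal ℝ w) {x : E} (hx : ‖x‖ = 1) :
    ‖gradient (fun u => ∑ i, ⟪w i, u⟫ ^ 2) x -
        ⟪gradient (fun u => ∑ i, ⟪w i, u⟫ ^ 2) x, x⟫ • x‖ ^ 2 =
      4 * ∑ i, ⟪w i, x⟫ ^ 2 - 4 * (∑ i, ⟪w i, x⟫ ^ 2) ^ 2 := by
  rw [(hasGradientAt_sum_inner_sq w x).gradient, norm_sub_inner_smul_sq_of_norm_eq_one _ hx]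
  have hnorm : ‖∑ i, (2 * ⟪w i, x⟫) • w i‖ ^ 2 = 4 * ∑ i, ⟪w i, x⟫ ^ 2 := by
    rw [← real_inner_self_eq_norm_sq, hw.inner_sum, Finset.mul_sum]
    refine Finset.sum_congr rfl fun i _ => ?_
    simp only [conj_trivial]
    ring
  have hinner : ⟪∑ i, (2 * ⟪w i, x⟫) • w i, x⟫ = 2 * ∑ i, ⟪w i, x⟫ ^ 2 := by
    rw [sum_inner, Finset.mul_sum]
    refine Finset.sum_congr rfl fun i _ => ?_
    rw [real_inner_smul_left]
    ring
  rw [hnorm, hinner]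
  ring

end SumInnerSq

section SkewClifford

variable {N m : ℕ}

theorem inner_act_left (B : Matrix (Fin N) (Fin N) ℝ) (u v : EuclideanSpace ℝ (Fin N)) :
    ⟪act B u, v⟫ = ⟪u, act Bᵀ v⟫ := by
  rw [act, act, ← conjTranspose_eq_transpose_of_trivial, toEuclideanLin_conjTranspose_eq_adjoint,
    LinearMap.adjoint_inner_right]

theorem inner_act_left_of_transpose_eq_neg {B : Matrix (Fin N) (Fin N) ℝ} (hB : Bᵀ = -B)
    (u v : EuclideanSpace ℝ (Fin N)) : ⟪act B u, v⟫ = -⟪u, act B v⟫ := by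
  rw [inner_act_left, hB, act, map_neg, LinearMap.neg_apply, inner_neg_right, act]

theorem inner_act_self_of_transpose_eq_neg {B : Matrix (Fin N) (Fin N) ℝ} (hB : Bᵀ = -B)
    (u : EuclideanSpace ℝ (Fin N)) : ⟪u, act B u⟫ = 0 := by
  have h := inner_act_left_of_transpose_eq_neg hB u u
  rw [real_inner_comm] at h
  linarith

/-- The frame `x, A₁ x, …, A_{m-1} x`, with `x` indexed by `none`. -/
def cliffordFrame (A : Fin (m - 1) → Matrix (Fin N) (Fin N) ℝ)
    (x : EuclideanSpace ℝ (Fin N)) : Option (Fin (m - 1)) → EuclideanSpace ℝ (Fin N) :=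
  fun o => o.elim x fun q => act (A q) x

theorem FKM_eq_sum_cliffordFrame (A : Fin (m - 1) → Matrix (Fin N) (Fin N) ℝ)
    (x y : EuclideanSpace ℝ (Fin N)) :
    FKM A x y = ∑ o, ⟪cliffordFrame A x o, y⟫ ^ 2 := by
  rw [Fintype.sum_option]
  rfl

namespace IsSkewCliffordSystem

variable {A : Fin (m - 1) → Matrix (Fin N) (Fin N) ℝ} (hA : IsSkewCliffordSystem A)
include hA

theorem inner_act_act (p q : Fin (m - 1)) (u : EuclideanSpace ℝ (Fin N)) :
    ⟪act (A p) u, act (A q) u⟫ = if p = q then ‖u‖ ^ 2 else 0 := by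
  have hpq := inner_act_left_of_transpose_eq_neg (hA.2 p) u (act (A q) u)
  have hqp := inner_act_left_of_transpose_eq_neg (hA.2 q) u (act (A p) u)
  have hsplit : act (A p * A q + A q * A p) u =
      act (A p) (act (A q) u) + act (A q) (act (A p) u) := by
    simp [act, toLpLin_apply, mulVec_mulVec]
  have hanti : ⟪u, act (A p * A q + A q * A p) u⟫ = if p = q then -2 * ‖u‖ ^ 2 else 0 := by
    rw [hA.1 p q]
    split_ifs <;> simp [act, inner_smul_right]
  rw [hsplit, inner_add_right] at hanti
  rw [real_inner_comm] at hqp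
  split_ifs at hanti ⊢ <;> linarith

theorem orthonormal_cliffordFrame {x : EuclideanSpace ℝ (Fin N)} (hx : ‖x‖ = 1) :
    Orthonormal ℝ (cliffordFrame A x) := by
  classical
  rw [orthonormal_iff_ite]
  rintro (_ | p) (_ | q)
  · simp [cliffordFrame, hx]
  · simp [cliffordFrame, inner_act_self_of_transpose_eq_neg (hA.2 q)]
  · simp [cliffordFrame, real_inner_comm x, inner_act_self_of_transpose_eq_neg (hA.2 p)]
  · simp [cliffordFrame, hA.inner_act_act, hx]

theorem FKM_comm (x y : EuclideanSpace ℝ (Fin N)) : FKM A x y = FKM A y x := by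
  simp only [FKM, real_inner_comm x y, inner_act_left_of_transpose_eq_neg (hA.2 _) x y,
    real_inner_comm x, neg_sq]

theorem norm_sub_inner_smul_gradient_FKM_sq {x y : EuclideanSpace ℝ (Fin N)}
    (hx : ‖x‖ = 1) (hy : ‖y‖ = 1) :
    ‖gradient (fun y' => FKM A x y') y - ⟪gradient (fun y' => FKM A x y') y, y⟫ • y‖ ^ 2 =
      4 * FKM A x y - 4 * FKM A x y ^ 2 := by
  simp only [FKM_eq_sum_cliffordFrame]
  exact (hA.orthonormal_cliffordFrame hx).norm_sub_inner_smul_gradient_sum_inner_sq hy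

end IsSkewCliffordSystem

end SkewClifford

theorem stmt5_general (n m : ℕ)
    (A : Fin (m - 1) → Matrix (Fin (n + 1)) (Fin (n + 1)) ℝ)
    (hA : IsSkewCliffordSystem A)
    (x y : EuclideanSpace ℝ (Fin (n + 1))) (hx : ‖x‖ = 1) (hy : ‖y‖ = 1) :
    ‖gradient (fun x' => FKM A x' y) x -
        ⟪gradient (fun x' => FKM A x' y) x, x⟫ • x‖ ^ 2 +
      ‖gradient (fun y' => FKM A x y') y -
        ⟪gradient (fun y' => FKM A x y') y, y⟫ • y‖ ^ 2 =
      8 * FKM A x y - 8 * (FKM A x y) ^ 2 := by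
  have hsymm : (fun x' => FKM A x' y) = fun x' => FKM A y x' := funext fun x' => hA.FKM_comm x' y
  rw [hsymm, hA.norm_sub_inner_smul_gradient_FKM_sq hy hx,
    hA.norm_sub_inner_smul_gradient_FKM_sq hx hy, hA.FKM_comm y x]
  ring

/-- for `‖x‖ = ‖y‖ = 1`, the gradient of `F` tangential to `S^n × S^n`,
`∇̄F = DF − ⟨DF,(x,0)⟩(x,0) − ⟨DF,(0,y)⟩(0,y)`, satisfies `‖∇̄F‖² = 8F − 8F²`.
Here `DF = (Gx, Gy)` is the full Euclidean gradient, `Gx`, `Gy` being the gradients of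
`F` in the `x`- and `y`-variables, so that
`‖∇̄F‖² = ‖Gx − ⟨Gx,x⟩ x‖² + ‖Gy − ⟨Gy,y⟩ y‖²`. -/
theorem stmt5 (n m : ℕ) (hn : 1 ≤ n) (hm : 1 ≤ m)
    (A : Fin (m - 1) → Matrix (Fin (n + 1)) (Fin (n + 1)) ℝ)
    (hA : IsSkewCliffordSystem A)
    (x y : EuclideanSpace ℝ (Fin (n + 1))) (hx : ‖x‖ = 1) (hy : ‖y‖ = 1) :
    ‖gradient (fun x' => FKM A x' y) x -
        ⟪gradient (fun x' => FKM A x' y) x, x⟫ • x‖ ^ 2 +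
      ‖gradient (fun y' => FKM A x y') y -
        ⟪gradient (fun y' => FKM A x y') y, y⟫ • y‖ ^ 2 =
      8 * FKM A x y - 8 * (FKM A x y) ^ 2 :=
  stmt5_general n m A hA x y hx hy
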